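/- Lower bound for Hermite function sums: for every m ≥ 1 and x with |x| ≤ 2√(2m+1), (3m+2)·h_m²(x) + 3m·h_{m−1}²(x) ≥ K_m(x,x), where K_m(x,x) = Σ_{j=0}^m h_j²(x). -/

import Mathlib

/-!
Writing `K_m = ∑_{j ≤ m} h_j²`, the three-term recurrence
`√(2(n+1)) h_{n+1} = 2t h_n - √(2n) h_{n-1}` telescopes to the diagonal Christoffel–Darboux
identity `K_m(x,x) = (m+1) h_m² + m h_{m-1}² - √(2m) x h_m h_{m-1}`. For `|x| ≤ 2√(2m+1)` the
cross term is at most `2√(2m)√(2m+1) |h_m| |h_{m-1}| ≤ (2m+1) h_m² + 2m h_{m-1}²` by AM–GM.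
-/

open Real MeasureTheory Finset

/-- The physicists' Hermite polynomial `H_n(t) = (-1)^n e^{t^2} (d/dt)^n e^{-t^2}`. -/
noncomputable def hermiteH (n : ℕ) (t : ℝ) : ℝ :=
  (-1 : ℝ) ^ n * Real.exp (t ^ 2) * iteratedDeriv n (fun s => Real.exp (-s ^ 2)) t

/-- The `L^2`-normalized Hermite function `h_n(t) = (2^n n! √π)^{-1/2} H_n(t) e^{-t^2/2}`. -/
noncomputable def hermiteh (n : ℕ) (t : ℝ) : ℝ :=
  (Real.sqrt (2 ^ n * n.factorial * Real.sqrt Real.pi))⁻¹ * hermiteH n t * Real.exp (-t ^ 2 / 2)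

/-- The `d`-dimensional Hermite function `𝓗_α(x) = h_{α₁}(x₁)⋯h_{α_d}(x_d)`. -/
noncomputable def hermiteHd (d : ℕ) (α : Fin d → ℕ) (x : Fin d → ℝ) : ℝ :=
  ∏ j, hermiteh (α j) (x j)

namespace Polynomial

theorem derivative_hermite_succ (n : ℕ) :
    derivative (hermite (n + 1)) = (n + 1 : ℤ[X]) * hermite n := by
  induction n with
  | zero => simp [hermite_zero]
  | succ n ih =>
    rw [hermite_succ (n + 1), derivative_sub, derivative_mul, ih, derivative_mul,
      derivative_X, hermite_succ n]
    simp only [derivative_add, derivative_natCast, derivative_one]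
    push_cast
    ring

theorem hermite_succ_succ (n : ℕ) :
    hermite (n + 2) = X * hermite (n + 1) - (n + 1 : ℤ[X]) * hermite n := by
  rw [hermite_succ (n + 1), derivative_hermite_succ]

end Polynomial

open Polynomial

-- Mathlib's `hermite n` is the probabilists' Hermite polynomial `He_n`.
theorem hermiteH_eq_aeval_hermite (n : ℕ) (t : ℝ) :
    hermiteH n t = √2 ^ n * aeval (√2 * t) (hermite n) := by
  have hg : ContDiff ℝ n (fun y : ℝ => exp (-(y ^ 2 / 2))) :=
    (((contDiff_id.pow 2).div_const 2).neg).exp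
  have hscale : (fun s : ℝ => exp (-s ^ 2)) = fun s => exp (-((√2 * s) ^ 2 / 2)) := by
    funext s
    rw [mul_pow, sq_sqrt zero_le_two]
    ring_nf
  have hexp : exp (t ^ 2) * exp (-((√2 * t) ^ 2 / 2)) = 1 := by
    rw [← exp_add, mul_pow, sq_sqrt zero_le_two]
    simp
  have hsign : (-1 : ℝ) ^ n * (-1) ^ n = 1 := by
    rw [← mul_pow]
    norm_num
  rw [hermiteH, hscale, congrFun (iteratedDeriv_comp_const_mul hg √2) t, iteratedDeriv_eq_iterate,
    deriv_gaussian_eq_hermite_mul_gaussian]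
  linear_combination ((-1) ^ n * (-1) ^ n * √2 ^ n * aeval (√2 * t) (hermite n)) * hexp
    + (√2 ^ n * aeval (√2 * t) (hermite n)) * hsign

theorem hermiteh_eq_aeval_hermite (n : ℕ) (t : ℝ) :
    hermiteh n t = (√(n.factorial * √π))⁻¹ * aeval (√2 * t) (hermite n) * exp (-t ^ 2 / 2) := by
  have hpow : √((2 : ℝ) ^ n) = √2 ^ n := by
    rw [← sqrt_sq (by positivity : (0 : ℝ) ≤ √2 ^ n), ← pow_mul, mul_comm, pow_mul,
      sq_sqrt zero_le_two]
  rw [hermiteh, hermiteH_eq_aeval_hermite, mul_assoc (2 ^ n : ℝ), sqrt_mul (by positivity), hpow]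
  field_simp

theorem sqrt_succ_mul_inv_sqrt_factorial_succ_mul (n : ℕ) {c : ℝ} (hc : 0 < c) :
    √(n + 1) * (√((n + 1).factorial * c))⁻¹ = (√(n.factorial * c))⁻¹ := by
  rw [Nat.factorial_succ, Nat.cast_mul, mul_assoc, sqrt_mul (by positivity), mul_inv]
  push_cast
  field_simp

-- At `n = 0` the truncated index `n - 1 = 0` is harmless: its coefficient `√(2 * 0)` vanishes.
theorem hermiteh_succ (n : ℕ) (t : ℝ) :
    √(2 * (n + 1)) * hermiteh (n + 1) t = 2 * t * hermiteh n t - √(2 * n) * hermiteh (n - 1) t := by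
  have hs2 : √2 * √2 = 2 := mul_self_sqrt zero_le_two
  rcases n with _ | k
  · simp only [hermiteh_eq_aeval_hermite, hermite_one, hermite_zero, aeval_X, map_one,
      CharP.cast_eq_zero, zero_add, mul_one, one_mul, mul_zero, sqrt_zero, zero_mul,
      sub_zero, Nat.factorial_zero, Nat.factorial_one, Nat.cast_one]
    linear_combination (t * exp (-t ^ 2 / 2) * (√(√π))⁻¹) * hs2
  · have hc₁ := sqrt_succ_mul_inv_sqrt_factorial_succ_mul (k + 1) (sqrt_pos.2 pi_pos)
    have hc₀ := sqrt_succ_mul_inv_sqrt_factorial_succ_mul k (sqrt_pos.2 pi_pos)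
    have hk : √(k + 1) * √(k + 1) = k + 1 := mul_self_sqrt (by positivity)
    rw [Nat.add_sub_cancel, hermiteh_eq_aeval_hermite, hermiteh_eq_aeval_hermite,
      hermiteh_eq_aeval_hermite, hermite_succ_succ, sqrt_mul zero_le_two, sqrt_mul zero_le_two]
    push_cast at hc₁ ⊢
    simp only [map_sub, map_mul, aeval_X, map_add, map_natCast, map_one]
    set A := aeval (√2 * t) (hermite (k + 1))
    set B := aeval (√2 * t) (hermite k)
    set E := exp (-t ^ 2 / 2)
    set c₁ := (√((k + 1).factorial * √π))⁻¹
    linear_combination (√2 * (√2 * t * A - (k + 1) * B) * E) * hc₁ + (t * c₁ * A * E) * hs2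
      - (√2 * √(k + 1) * B * E) * hc₀ + (√2 * c₁ * B * E) * hk

theorem sum_range_succ_sq_hermiteh (m : ℕ) (x : ℝ) :
    ∑ j ∈ range (m + 1), hermiteh j x ^ 2
      = (m + 1) * hermiteh m x ^ 2 + m * hermiteh (m - 1) x ^ 2
        - √(2 * m) * x * hermiteh m x * hermiteh (m - 1) x := by
  induction m with
  | zero => simp
  | succ m ih =>
    have hrec := hermiteh_succ m x
    have ha : √(2 * (m + 1)) * √(2 * (m + 1)) = 2 * (m + 1) := mul_self_sqrt (by positivity)
    have hb : √(2 * m) * √(2 * m) = 2 * m := mul_self_sqrt (by positivity)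
    rw [sum_range_succ, ih, Nat.add_sub_cancel]
    push_cast
    linear_combination (x * hermiteh m x - (√(2 * (m + 1)) * hermiteh (m + 1) x
        + 2 * x * hermiteh m x - √(2 * m) * hermiteh (m - 1) x) / 2) * hrec
      + hermiteh (m + 1) x ^ 2 / 2 * ha - hermiteh (m - 1) x ^ 2 / 2 * hb

theorem abs_mul_mul_le_of_abs_le_two_sqrt_mul {p q c : ℝ} (hp : 0 ≤ p) (hq : 0 ≤ q)
    (hc : |c| ≤ 2 * √(p * q)) (a b : ℝ) : |c * a * b| ≤ p * a ^ 2 + q * b ^ 2 := by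
  calc |c * a * b| = |c| * (|a| * |b|) := by rw [abs_mul, abs_mul, mul_assoc]
    _ ≤ 2 * (√p * |a|) * (√q * |b|) := by
      rw [sqrt_mul hp] at hc
      nlinarith [mul_le_mul_of_nonneg_right hc (by positivity : 0 ≤ |a| * |b|)]
    _ ≤ (√p * |a|) ^ 2 + (√q * |b|) ^ 2 := two_mul_le_add_sq _ _
    _ = p * a ^ 2 + q * b ^ 2 := by rw [mul_pow, mul_pow, sq_sqrt hp, sq_sqrt hq, sq_abs, sq_abs]

theorem hermiteh_lower_bound_general (m : ℕ) (x : ℝ)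
    (hx : |x| ≤ 2 * Real.sqrt (2 * (m : ℝ) + 1)) :
    ∑ j ∈ Finset.range (m + 1), (hermiteh j x) ^ 2
      ≤ (3 * (m : ℝ) + 2) * (hermiteh m x) ^ 2 + 3 * (m : ℝ) * (hermiteh (m - 1) x) ^ 2 := by
  have hc : |√(2 * m) * x| ≤ 2 * √((2 * m + 1) * (2 * m)) := by
    rw [abs_mul, abs_of_nonneg (sqrt_nonneg _), sqrt_mul (by positivity : (0 : ℝ) ≤ 2 * m + 1)]
    linarith [mul_le_mul_of_nonneg_left hx (sqrt_nonneg (2 * m))]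
  have hcross := abs_mul_mul_le_of_abs_le_two_sqrt_mul (by positivity) (by positivity) hc
    (hermiteh m x) (hermiteh (m - 1) x)
  rw [sum_range_succ_sq_hermiteh]
  linarith [neg_abs_le (√(2 * m) * x * hermiteh m x * hermiteh (m - 1) x)]

/-- Lower bound for Hermite function sums:
`(3m+2)h_m²(x) + 3m·h_{m-1}²(x) ≥ K_m(x,x)` for `|x| ≤ 2√(2m+1)`. -/
theorem hermiteh_lower_bound (m : ℕ) (hm : 1 ≤ m) (x : ℝ)
    (hx : |x| ≤ 2 * Real.sqrt (2 * (m : ℝ) + 1)) :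
    ∑ j ∈ Finset.range (m + 1), (hermiteh j x) ^ 2
      ≤ (3 * (m : ℝ) + 2) * (hermiteh m x) ^ 2 + 3 * (m : ℝ) * (hermiteh (m - 1) x) ^ 2 :=
  hermiteh_lower_bound_general m x hx
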